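/- arXiv:1608.05211 — 2 statements merged into one kernel-verified Lean document; each statement's English description precedes it below -/
import Mathlib

section
/- If X ~ Exp(1) (mean 1) and Y ~ Gamma(N-1, 1) are independent, with N ≥ 2 an integer, then for positive reals a, b with c = b/(N-1) and c ≠ a, the random variable Z = a·X + c·Y has probability density f_Z(x) = (1 - c/a)^{1-N} / (a·Γ(N-1)) · exp(-x/a) · γ(N-1, (1/c - 1/a)·x) for x > 0, where γ is the lower incomplete gamma function. -/
open Real MeasureTheory Set ProbabilityTheory

open scoped ENNReal NNReal

lemma aux_map_mul (a : ℝ) (ha : 0 < a) (f : ℝ → ℝ≥0∞) (hf : Measurable f) :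
    Measure.map (fun x => a * x) (volume.withDensity f) =
    volume.withDensity (fun y => ENNReal.ofReal a⁻¹ * f (a⁻¹ * y)) := by
  ext s hs
  rw [Measure.map_apply (measurable_const_mul a) hs,
    withDensity_apply _ (hs.preimage (measurable_const_mul a)), withDensity_apply _ hs]
  have h1 : ∫⁻ y in s, f (a⁻¹ * y) ∂(Measure.map (fun x => a * x) volume)
      = ∫⁻ x in (fun x => a * x) ⁻¹' s, f (a⁻¹ * (a * x)) ∂volume :=
    setLIntegral_map hs (hf.comp (measurable_const_mul _)) (measurable_const_mul a)
  simp only [inv_mul_cancel_left₀ ha.ne'] at h1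
  rw [← h1, Real.map_volume_mul_left ha.ne', Measure.restrict_smul, lintegral_smul_measure,
    abs_of_pos (inv_pos.mpr ha),
    lintegral_const_mul _ (show Measurable fun y => f (a⁻¹ * y) from
      hf.comp (measurable_const_mul _)), smul_eq_mul]

lemma aux_gamma_scale (s : ℝ) (hs : 0 < s) (a : ℝ) (ha : 0 < a) :
    Measure.map (fun x => a * x) (gammaMeasure s 1) = gammaMeasure s a⁻¹ := by
  rw [gammaMeasure, aux_map_mul a ha (gammaPDF s 1) (show Measurable (gammaPDF s 1) from (measurable_gammaPDFReal s 1).ennreal_ofReal), gammaMeasure]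
  congr 1
  funext y
  rw [gammaPDF_eq, gammaPDF_eq, ← ENNReal.ofReal_mul (by positivity)]
  congr 1
  have hy0 : (0 ≤ a⁻¹ * y) ↔ (0 ≤ y) := by
    constructor <;> intro h <;> nlinarith [inv_pos.mpr ha]
  by_cases hy : 0 ≤ y
  · rw [if_pos (hy0.mpr hy), if_pos hy, Real.mul_rpow (by positivity) hy, Real.one_rpow]
    have h2 : a⁻¹ * a⁻¹ ^ (s - 1) = a⁻¹ ^ s := by
      rw [← Real.rpow_one_add' (by positivity) (by intro h; exact hs.ne' (by linarith))]
      ring_nf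
    rw [← h2, one_mul]; ring
  · rw [if_neg (fun h => hy (hy0.mp h)), if_neg hy, mul_zero]

lemma aux_conv (f g : ℝ → ℝ≥0∞) (hf : Measurable f) (hg : Measurable g) :
    Measure.map (fun p : ℝ × ℝ => p.1 + p.2) ((volume.withDensity f).prod (volume.withDensity g))
      = volume.withDensity (fun z => ∫⁻ x, f x * g (z - x)) := by
  ext s hs
  have hinds : Measurable (s.indicator (1 : ℝ → ℝ≥0∞)) :=
    (measurable_const : Measurable (1 : ℝ → ℝ≥0∞)).indicator hs
  have hgs : ∀ x : ℝ, Measurable fun z => g (z - x) * s.indicator 1 z := fun x =>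
    (hg.comp (measurable_id.sub_const x)).mul hinds
  rw [Measure.map_apply measurable_add hs, withDensity_apply _ hs,
    Measure.prod_apply (hs.preimage measurable_add)]
  have key : ∀ x : ℝ, (volume.withDensity g) (Prod.mk x ⁻¹' ((fun p : ℝ × ℝ => p.1 + p.2) ⁻¹' s))
      = ∫⁻ z, g (z - x) * s.indicator 1 z := by
    intro x
    have hset : (Prod.mk x ⁻¹' ((fun p : ℝ × ℝ => p.1 + p.2) ⁻¹' s)) = (fun y => x + y) ⁻¹' s := rfl
    rw [hset, withDensity_apply _ (hs.preimage (measurable_const_add x)),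
      ← lintegral_indicator (hs.preimage (measurable_const_add x)) g]
    have h1 : ∀ y : ℝ, ((fun y => x + y) ⁻¹' s).indicator g y = g y * s.indicator 1 (x + y) := by
      intro y
      by_cases hy : x + y ∈ s
      · rw [Set.indicator_of_mem (Set.mem_preimage.mpr hy), Set.indicator_of_mem hy,
          Pi.one_apply, mul_one]
      · rw [Set.indicator_of_notMem (fun h => hy (Set.mem_preimage.mp h)),
          Set.indicator_of_notMem hy, mul_zero]
    rw [lintegral_congr h1]
    calc ∫⁻ y, g y * s.indicator 1 (x + y)
        = ∫⁻ z, g (z - x) * s.indicator 1 z ∂(Measure.map (· + x) volume) := by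
          rw [lintegral_map (hgs x) (measurable_add_const x)]
          simp_rw [add_sub_cancel_right]
          congr 1; funext y; rw [add_comm]
      _ = ∫⁻ z, g (z - x) * s.indicator 1 z := by rw [map_add_right_eq_self volume x]
  simp_rw [key]
  rw [lintegral_withDensity_eq_lintegral_mul _ hf
    (Measurable.lintegral_prod_right (f := fun x z => g (z - x) * s.indicator 1 z)
      ((hg.comp (measurable_snd.sub measurable_fst)).mul (hinds.comp measurable_snd)))]
  have swap : (∫⁻ x, f x * ∫⁻ z, g (z - x) * s.indicator 1 z)
      = ∫⁻ z, (∫⁻ x, f x * g (z - x)) * s.indicator 1 z := by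
    have e1 : ∀ x : ℝ, f x * ∫⁻ z, g (z - x) * s.indicator 1 z
        = ∫⁻ z, f x * (g (z - x) * s.indicator 1 z) := fun x =>
      (lintegral_const_mul _ (hgs x)).symm
    simp_rw [e1]
    rw [lintegral_lintegral_swap]
    · congr 1; funext z
      rw [← lintegral_mul_const _ (show Measurable fun x => f x * g (z - x) from
        hf.mul (hg.comp (measurable_const.sub measurable_id)))]
      congr 1; funext x; ring
    · apply Measurable.aemeasurable
      exact (hf.comp measurable_fst).mul
        (((hg.comp (measurable_snd.sub measurable_fst))).mul (hinds.comp measurable_snd))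
  show (∫⁻ x, f x * ∫⁻ z, g (z - x) * s.indicator 1 z) = _
  rw [swap, ← lintegral_indicator hs]
  refine lintegral_congr fun z => ?_
  by_cases hz : z ∈ s
  · rw [Set.indicator_of_mem hz, Set.indicator_of_mem hz, Pi.one_apply, mul_one]
  · rw [Set.indicator_of_notMem hz, Set.indicator_of_notMem hz, mul_zero]

lemma aux_density (N : ℕ) (hN : 2 ≤ N) (a c : ℝ) (ha : 0 < a) (hc0 : 0 < c) (hca : c ≠ a)
    (z : ℝ) :
    (∫⁻ x, gammaPDF 1 a⁻¹ x * gammaPDF ((N : ℝ) - 1) c⁻¹ (z - x)) =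
    ENNReal.ofReal (if 0 < z then
      (1 - c / a) ^ ((1 : ℤ) - N) / (a * Real.Gamma ((N : ℝ) - 1)) * Real.exp (-(z / a)) *
        ∫ t in (0 : ℝ)..(1 / c - 1 / a) * z, t ^ (N - 2 : ℕ) * Real.exp (-t)
      else 0) := by
  have hN1 : (0 : ℝ) < (N : ℝ) - 1 := by
    have : (2 : ℝ) ≤ (N : ℝ) := by exact_mod_cast hN
    linarith
  by_cases hz : 0 < z
  · rw [if_pos hz]
    set k : ℝ := 1 / c - 1 / a with hk_def
    have hk : k ≠ 0 := by
      rw [hk_def, sub_ne_zero]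
      intro h
      rw [div_eq_div_iff hc0.ne' ha.ne', one_mul, one_mul] at h
      exact hca h.symm
    set G : ℝ → ℝ := fun t => t ^ (N - 2 : ℕ) * Real.exp (-t) with hG_def
    set ψ : ℝ → ℝ := fun x => (a⁻¹ * Real.exp (-(a⁻¹ * x))) *
      (c⁻¹ ^ (N - 1 : ℕ) / Real.Gamma ((N : ℝ) - 1) * (z - x) ^ (N - 2 : ℕ) *
        Real.exp (-(c⁻¹ * (z - x)))) with hψ_def
    have hcast2 : ((N : ℝ) - 1) - 1 = ((N - 2 : ℕ) : ℝ) := by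
      push_cast [Nat.cast_sub (by omega : 2 ≤ N)]; ring
    have hcast1 : (N : ℝ) - 1 = ((N - 1 : ℕ) : ℝ) := by
      push_cast [Nat.cast_sub (by omega : 1 ≤ N)]; ring
    -- pointwise identity with the indicator
    have hφ : ∀ x : ℝ, gammaPDFReal 1 a⁻¹ x * gammaPDFReal ((N : ℝ) - 1) c⁻¹ (z - x)
        = (Icc 0 z).indicator ψ x := by
      intro x
      unfold gammaPDFReal
      by_cases h1 : 0 ≤ x
      · by_cases h2 : x ≤ z
        · rw [if_pos h1, if_pos (by linarith : (0:ℝ) ≤ z - x),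
            Set.indicator_of_mem (Set.mem_Icc.mpr ⟨h1, h2⟩)]
          rw [hψ_def]
          rw [Real.Gamma_one, Real.rpow_one, show (1 : ℝ) - 1 = 0 by ring, Real.rpow_zero]
          rw [hcast2, hcast1, Real.rpow_natCast, Real.rpow_natCast]
          ring
        · rw [if_neg (by intro h; exact h2 (by linarith) : ¬ (0:ℝ) ≤ z - x),
            Set.indicator_of_notMem (fun h => h2 (Set.mem_Icc.mp h).2), mul_zero]
      · rw [if_neg h1, Set.indicator_of_notMem (fun h => h1 (Set.mem_Icc.mp h).1), zero_mul]
    have hψc : Continuous ψ := by fun_prop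
    have hint : Integrable ((Icc 0 z).indicator ψ) volume :=
      (hψc.continuousOn.integrableOn_compact isCompact_Icc).integrable_indicator
        measurableSet_Icc
    calc (∫⁻ x, gammaPDF 1 a⁻¹ x * gammaPDF ((N : ℝ) - 1) c⁻¹ (z - x))
        = ∫⁻ x, ENNReal.ofReal ((Icc 0 z).indicator ψ x) := by
          refine lintegral_congr fun x => ?_
          rw [gammaPDF, gammaPDF, ← ENNReal.ofReal_mul
            (gammaPDFReal_nonneg one_pos (inv_pos.mpr ha) x), hφ x]
      _ = ENNReal.ofReal (∫ x, (Icc 0 z).indicator ψ x) := by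
          rw [← MeasureTheory.ofReal_integral_eq_lintegral_ofReal hint]
          filter_upwards with x
          rw [← hφ x]
          exact mul_nonneg (gammaPDFReal_nonneg one_pos (inv_pos.mpr ha) x)
            (gammaPDFReal_nonneg hN1 (inv_pos.mpr hc0) (z - x))
      _ = ENNReal.ofReal (∫ x in (0:ℝ)..z, ψ x) := by
          rw [MeasureTheory.integral_indicator measurableSet_Icc,
            MeasureTheory.integral_Icc_eq_integral_Ioc,
            ← intervalIntegral.integral_of_le hz.le]
    congr 1
    -- now the real computation
    set C0 : ℝ := a⁻¹ * (c⁻¹ ^ (N - 1 : ℕ) / Real.Gamma ((N : ℝ) - 1)) * Real.exp (-(z / a)) *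
      (k ^ (N - 2 : ℕ))⁻¹ with hC0_def
    have hψG : ∀ x : ℝ, ψ x = C0 * G (k * (z - x)) := by
      intro x
      have e1 : Real.exp (-(a⁻¹ * x)) * Real.exp (-(c⁻¹ * (z - x)))
          = Real.exp (-(z / a)) * Real.exp (-(k * (z - x))) := by
        rw [← Real.exp_add, ← Real.exp_add]
        congr 1
        rw [hk_def]
        field_simp
        ring
      rw [hψ_def, hC0_def, hG_def]
      simp only
      rw [mul_pow]
      have e2 : (k ^ (N - 2 : ℕ))⁻¹ * k ^ (N - 2 : ℕ) = 1 :=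
        inv_mul_cancel₀ (pow_ne_zero _ hk)
      have e3 : (a⁻¹ * rexp (-(a⁻¹ * x))) * (c⁻¹ ^ (N-1:ℕ) / Real.Gamma ((N:ℝ)-1) *
            (z-x) ^ (N-2:ℕ) * rexp (-(c⁻¹ * (z - x))))
          = (a⁻¹ * (c⁻¹ ^ (N-1:ℕ) / Real.Gamma ((N:ℝ)-1)) * (z-x) ^ (N-2:ℕ)) *
            (rexp (-(a⁻¹ * x)) * rexp (-(c⁻¹ * (z - x)))) := by ring
      rw [e3, e1]
      have e4 : a⁻¹ * (c⁻¹ ^ (N-1:ℕ) / Real.Gamma ((N:ℝ)-1)) * rexp (-(z / a)) *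
            (k ^ (N-2:ℕ))⁻¹ * (k ^ (N-2:ℕ) * (z - x) ^ (N-2:ℕ) * rexp (-(k * (z - x))))
          = (a⁻¹ * (c⁻¹ ^ (N-1:ℕ) / Real.Gamma ((N:ℝ)-1)) * (z-x) ^ (N-2:ℕ)) *
            (rexp (-(z / a)) * rexp (-(k * (z - x)))) * ((k ^ (N-2:ℕ))⁻¹ * k ^ (N-2:ℕ)) := by
        ring
      rw [e4, e2, mul_one]
    rw [intervalIntegral.integral_congr (fun x _ => hψG x), intervalIntegral.integral_const_mul]
    have h3 : (∫ x in (0:ℝ)..z, G (k * (z - x)))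
        = ∫ x in (0:ℝ)..z, (fun u => G (k * u)) (z - x) := by norm_num
    rw [h3, intervalIntegral.integral_comp_sub_left (fun u => G (k * u)) z, sub_self, sub_zero,
      intervalIntegral.integral_comp_mul_left G hk, mul_zero, smul_eq_mul]
    -- constants
    have h1N : ((1 : ℤ) - N) = -((N - 1 : ℕ) : ℤ) := by
      push_cast [Nat.cast_sub (by omega : 1 ≤ N)]; ring
    have hck : c * k = 1 - c / a := by rw [hk_def]; field_simp
    have hG0 : Real.Gamma ((N : ℝ) - 1) ≠ 0 := (Real.Gamma_pos_of_pos hN1).ne'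
    have hpow : (1 - c / a) ^ ((1 : ℤ) - N) = (c ^ (N-1:ℕ) * k ^ (N-1:ℕ))⁻¹ := by
      rw [h1N, zpow_neg, zpow_natCast, ← hck, mul_pow]
    have hsplit : (N - 1 : ℕ) = (N - 2 : ℕ) + 1 := by omega
    have hkey : C0 * k⁻¹ = (c ^ (N-1:ℕ) * k ^ (N-1:ℕ))⁻¹ / (a * Real.Gamma ((N:ℝ)-1)) *
        rexp (-(z / a)) := by
      rw [hC0_def, hsplit, pow_succ, pow_succ]
      simp only [inv_pow]
      field_simp
      ring
    rw [hpow, ← mul_assoc, hkey]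
  · rw [if_neg hz]
    push_neg at hz
    rw [ENNReal.ofReal_zero, lintegral_eq_zero_iff
      (show Measurable fun x => gammaPDF 1 a⁻¹ x * gammaPDF ((N:ℝ)-1) c⁻¹ (z - x) from
        (measurable_gammaPDFReal 1 a⁻¹).ennreal_ofReal.mul
        (((measurable_gammaPDFReal ((N:ℝ)-1) c⁻¹).ennreal_ofReal).comp
          (measurable_const.sub measurable_id)))]
    have hzs : ∀ᵐ x : ℝ ∂volume, x ≠ z := by
      rw [ae_iff]
      have : {x : ℝ | ¬ x ≠ z} = {z} := by ext x; simp
      rw [this]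
      exact Real.volume_singleton
    filter_upwards [hzs] with x hx
    show gammaPDF 1 a⁻¹ x * gammaPDF ((N:ℝ)-1) c⁻¹ (z - x) = 0
    by_cases h1 : 0 ≤ x
    · have : z - x < 0 := by
        rcases lt_or_eq_of_le h1 with h | h
        · linarith
        · have : x = 0 := h.symm
          subst this
          rcases lt_or_eq_of_le hz with h | h
          · linarith
          · exact absurd h hx.symm
      rw [gammaPDF_of_neg this, mul_zero]
    · rw [gammaPDF_of_neg (lt_of_not_ge h1), zero_mul]

/-- Lemma 1 of the paper (unequal-power case): if `X ~ Exp(1)` (mean 1) and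
`Y ~ Gamma(N-1, 1)` are independent, `N ≥ 2` an integer, `a, b > 0`, `c = b/(N-1)` with
`c ≠ a`, then `Z = aX + cY` has density
`f_Z(x) = (1 - c/a)^{1-N}/(a Γ(N-1)) e^{-x/a} γ(N-1, (1/c - 1/a)x)` for `x > 0`,
where `γ(s,w) = ∫_0^w t^{s-1} e^{-t} dt` is the lower incomplete gamma function. -/
theorem convolution_density (N : ℕ) (hN : 2 ≤ N) (a b c : ℝ) (ha : 0 < a) (hb : 0 < b)
    (hc : c = b / ((N : ℝ) - 1)) (hca : c ≠ a)
    {Ω : Type*} [MeasurableSpace Ω] (P : Measure Ω) [IsProbabilityMeasure P]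
    (X Y : Ω → ℝ) (hX : Measure.map X P = expMeasure 1)
    (hY : Measure.map Y P = gammaMeasure ((N : ℝ) - 1) 1)
    (hindep : IndepFun X Y P) :
    Measure.map (fun ω => a * X ω + c * Y ω) P =
      volume.withDensity (fun x =>
        ENNReal.ofReal (if 0 < x then
          (1 - c / a) ^ ((1 : ℤ) - N) / (a * Real.Gamma ((N : ℝ) - 1)) *
            Real.exp (-(x / a)) *
            ∫ t in (0 : ℝ)..(1 / c - 1 / a) * x, t ^ (N - 2 : ℕ) * Real.exp (-t)
          else 0)) := by
  have hN1 : (0 : ℝ) < (N : ℝ) - 1 := by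
    have : (2 : ℝ) ≤ (N : ℝ) := by exact_mod_cast hN
    linarith
  have hc0 : 0 < c := hc ▸ div_pos hb hN1
  have hXm : AEMeasurable X P := by
    by_contra h
    rw [Measure.map_of_not_aemeasurable h] at hX
    have : IsProbabilityMeasure (expMeasure 1) := isProbabilityMeasure_expMeasure one_pos
    exact zero_ne_one ((hX ▸ (Measure.coe_zero ▸ rfl : (0 : Measure ℝ) Set.univ = 0)).symm.trans
      (measure_univ))
  have hYm : AEMeasurable Y P := by
    by_contra h
    rw [Measure.map_of_not_aemeasurable h] at hY
    have : IsProbabilityMeasure (gammaMeasure ((N : ℝ) - 1) 1) :=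
      isProbabilityMeasure_gammaMeasure hN1 one_pos
    exact zero_ne_one ((hY ▸ (Measure.coe_zero ▸ rfl : (0 : Measure ℝ) Set.univ = 0)).symm.trans
      (measure_univ))
  have haX : AEMeasurable (fun ω => a * X ω) P := hXm.const_mul a
  have hcY : AEMeasurable (fun ω => c * Y ω) P := hYm.const_mul c
  have hmapaX : Measure.map (fun ω => a * X ω) P = gammaMeasure 1 a⁻¹ := by
    have : Measure.map (fun ω => a * X ω) P = Measure.map (fun x => a * x) (Measure.map X P) := by
      rw [AEMeasurable.map_map_of_aemeasurable (measurable_const_mul a).aemeasurable hXm]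
      rfl
    rw [this, hX, expMeasure, aux_gamma_scale 1 one_pos a ha]
  have hmapcY : Measure.map (fun ω => c * Y ω) P = gammaMeasure ((N : ℝ) - 1) c⁻¹ := by
    have : Measure.map (fun ω => c * Y ω) P = Measure.map (fun x => c * x) (Measure.map Y P) := by
      rw [AEMeasurable.map_map_of_aemeasurable (measurable_const_mul c).aemeasurable hYm]
      rfl
    rw [this, hY, aux_gamma_scale _ hN1 c hc0]
  have hindep' : IndepFun (fun ω => a * X ω) (fun ω => c * Y ω) P :=
    hindep.comp (measurable_const_mul a) (measurable_const_mul c)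
  have hpair : Measure.map (fun ω => (a * X ω, c * Y ω)) P =
      (gammaMeasure 1 a⁻¹).prod (gammaMeasure ((N : ℝ) - 1) c⁻¹) := by
    rw [← hmapaX, ← hmapcY]
    exact (indepFun_iff_map_prod_eq_prod_map_map haX hcY).mp hindep'
  have hcomp : Measure.map (fun ω => a * X ω + c * Y ω) P =
      Measure.map (fun p : ℝ × ℝ => p.1 + p.2) (Measure.map (fun ω => (a * X ω, c * Y ω)) P) := by
    rw [AEMeasurable.map_map_of_aemeasurable measurable_add.aemeasurable (haX.prodMk hcY)]
    rfl
  rw [hcomp, hpair, gammaMeasure, gammaMeasure,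
    aux_conv (gammaPDF 1 a⁻¹) (gammaPDF ((N : ℝ) - 1) c⁻¹)
      (show Measurable (gammaPDF 1 a⁻¹) from (measurable_gammaPDFReal 1 a⁻¹).ennreal_ofReal)
      (show Measurable (gammaPDF ((N : ℝ) - 1) c⁻¹) from
        (measurable_gammaPDFReal ((N : ℝ) - 1) c⁻¹).ennreal_ofReal)]
  congr 1
  funext z
  exact aux_density N hN a c ha hc0 hca z
end

section
/- (Alzer's inequality, lower bound form) If X is Gamma distributed with integer shape N ≥ 1 and scale 1, then for all y ≥ 0, (1 - exp(-κ y))^N ≤ P(X ≤ y), where κ = (N!)^{-1/N}. -/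
/-!
Write `F` for the Gamma(N, 1) distribution function and `G y = (1 - exp (-κ y)) ^ N`; both rise
from `0` to `1`. Their derivatives satisfy `F' = G' · exp P` with
`P y = (N - 1) log (κ y / (1 - exp (-κ y))) + (κ - 1) y`; the normalisation `κ ^ N = 1 / N!` is
exactly what makes the constants agree. `P` is concave with `P 0 = 0`, because the second
derivative of `log (t / (1 - exp (-t)))` is nonpositive iff `t / 2 ≤ sinh (t / 2)`. Hence `P`
is nonnegative up to some point and negative afterwards, so `F - G` first increases and then
decreases; vanishing at `0` and at `∞`, it is nonnegative.
-/

open Real MeasureTheory Set Filter Topology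

lemma sq_mul_exp_neg_le_one_sub_exp_neg_sq (t : ℝ) : t ^ 2 * exp (-t) ≤ (1 - exp (-t)) ^ 2 := by
  have h₁ : exp (-(t / 2)) * exp (t / 2) = 1 := by rw [← exp_add]; simp
  have h₂ : exp (-(t / 2)) ^ 2 = exp (-t) := by rw [← exp_nat_mul]; ring_nf
  have hsinh : 1 - exp (-t) = 2 * exp (-(t / 2)) * sinh (t / 2) := by
    rw [sinh_eq]; linear_combination -h₁ + h₂
  have hle : (t / 2) ^ 2 ≤ sinh (t / 2) ^ 2 := by
    rw [sq_le_sq, abs_sinh]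
    exact self_le_sinh_iff.mpr (abs_nonneg _)
  calc t ^ 2 * exp (-t) = 4 * exp (-(t / 2)) ^ 2 * (t / 2) ^ 2 := by rw [h₂]; ring
    _ ≤ 4 * exp (-(t / 2)) ^ 2 * sinh (t / 2) ^ 2 := by gcongr
    _ = (1 - exp (-t)) ^ 2 := by rw [hsinh]; ring

lemma hasDerivAt_one_sub_exp_neg (t : ℝ) :
    HasDerivAt (fun s => 1 - exp (-s)) (exp (-t)) t := by
  simpa using ((hasDerivAt_id t).neg.exp.const_sub 1)

lemma dslope_one_sub_exp_neg_pos (t : ℝ) : 0 < dslope (fun s => 1 - exp (-s)) 0 t := by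
  rcases lt_trichotomy t 0 with ht | rfl | ht
  · rw [dslope_of_ne _ ht.ne, slope_def_field]
    apply div_pos_of_neg_of_neg _ (by linarith)
    simp only [neg_zero, exp_zero, sub_self, sub_zero]
    linarith [one_lt_exp_iff.mpr (neg_pos.mpr ht)]
  · simp [dslope_same, (hasDerivAt_one_sub_exp_neg 0).deriv]
  · rw [dslope_of_ne _ ht.ne', slope_def_field]
    apply div_pos _ (by linarith)
    simp only [neg_zero, exp_zero, sub_self, sub_zero]
    linarith [exp_lt_one_iff.mpr (neg_neg_of_pos ht)]

/-- `log (t / (1 - exp (-t)))`, extended continuously by `0` at `t = 0`. -/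
noncomputable def logDivOneSubExpNeg (t : ℝ) : ℝ := -log (dslope (fun s => 1 - exp (-s)) 0 t)

lemma logDivOneSubExpNeg_zero : logDivOneSubExpNeg 0 = 0 := by
  simp [logDivOneSubExpNeg, dslope_same, (hasDerivAt_one_sub_exp_neg 0).deriv]

lemma one_sub_exp_neg_ne_zero {t : ℝ} (ht : t ≠ 0) : 1 - exp (-t) ≠ 0 := by
  rw [sub_ne_zero, ne_comm, Ne, exp_eq_one_iff, neg_eq_zero]
  exact ht

lemma dslope_one_sub_exp_neg_of_ne_zero {t : ℝ} (ht : t ≠ 0) :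
    dslope (fun s => 1 - exp (-s)) 0 t = (1 - exp (-t)) / t := by
  simp [dslope_of_ne _ ht, slope_def_field]

lemma logDivOneSubExpNeg_of_ne_zero {t : ℝ} (ht : t ≠ 0) :
    logDivOneSubExpNeg t = log t - log (1 - exp (-t)) := by
  rw [logDivOneSubExpNeg, dslope_one_sub_exp_neg_of_ne_zero ht,
    log_div (one_sub_exp_neg_ne_zero ht) ht, neg_sub]

lemma exp_logDivOneSubExpNeg {t : ℝ} (ht : t ≠ 0) :
    exp (logDivOneSubExpNeg t) = t / (1 - exp (-t)) := by
  rw [logDivOneSubExpNeg, exp_neg, exp_log (dslope_one_sub_exp_neg_pos t),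
    dslope_one_sub_exp_neg_of_ne_zero ht, inv_div]

lemma continuous_logDivOneSubExpNeg : Continuous logDivOneSubExpNeg := by
  have hdiff : Differentiable ℝ fun s : ℝ => 1 - exp (-s) :=
    fun t => (hasDerivAt_one_sub_exp_neg t).differentiableAt
  have hslope : Continuous (dslope (fun s => 1 - exp (-s)) 0) :=
    continuousOn_univ.mp <| (continuousOn_dslope Filter.univ_mem).mpr
      ⟨hdiff.continuous.continuousOn, hdiff 0⟩
  exact (hslope.log fun t => (dslope_one_sub_exp_neg_pos t).ne').neg

lemma hasDerivAt_logDivOneSubExpNeg {t : ℝ} (ht : t ≠ 0) :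
    HasDerivAt logDivOneSubExpNeg (1 / t - exp (-t) / (1 - exp (-t))) t := by
  have hL : (fun s => log s - log (1 - exp (-s))) =ᶠ[𝓝 t] logDivOneSubExpNeg := by
    filter_upwards [isOpen_ne.mem_nhds ht] with s hs
    exact (logDivOneSubExpNeg_of_ne_zero hs).symm
  refine HasDerivAt.congr_of_eventuallyEq ?_ hL.symm
  simpa only [one_div] using
    (hasDerivAt_log ht).fun_sub ((hasDerivAt_one_sub_exp_neg t).log (one_sub_exp_neg_ne_zero ht))

lemma hasDerivAt_deriv_logDivOneSubExpNeg {t : ℝ} (ht : t ≠ 0) :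
    HasDerivAt (fun s => 1 / s - exp (-s) / (1 - exp (-s)))
      (-(1 / t ^ 2) + exp (-t) / (1 - exp (-t)) ^ 2) t := by
  have hne := one_sub_exp_neg_ne_zero ht
  have hexp : HasDerivAt (fun s => exp (-s)) (-exp (-t)) t := by
    simpa using (hasDerivAt_neg t).exp
  have hq := hexp.fun_div (hasDerivAt_one_sub_exp_neg t) hne
  simp only [one_div]
  refine ((hasDerivAt_inv ht).fun_sub hq).congr_deriv ?_
  field_simp
  ring

lemma concaveOn_logDivOneSubExpNeg : ConcaveOn ℝ (Ici 0) logDivOneSubExpNeg := by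
  refine concaveOn_of_hasDerivWithinAt2_nonpos (convex_Ici 0)
    continuous_logDivOneSubExpNeg.continuousOn
    (fun t ht => (hasDerivAt_logDivOneSubExpNeg (ne_of_gt ?_)).hasDerivWithinAt)
    (fun t ht => (hasDerivAt_deriv_logDivOneSubExpNeg (ne_of_gt ?_)).hasDerivWithinAt) ?_
  · simpa using ht
  · simpa using ht
  intro t ht
  rw [interior_Ici, mem_Ioi] at ht
  have hne := one_sub_exp_neg_ne_zero ht.ne'
  rw [neg_add_nonpos_iff, div_le_div_iff₀ (by positivity) (by positivity), one_mul]
  linarith [sq_mul_exp_neg_le_one_sub_exp_neg_sq t]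

lemma ConcaveOn.neg_of_neg_of_le {P : ℝ → ℝ} (hP : ConcaveOn ℝ (Ici 0) P) (hP0 : 0 ≤ P 0)
    {a t : ℝ} (ha : 0 < a) (hat : a ≤ t) (hPa : P a < 0) : P t < 0 :=
  (hP.right_le_of_le_left'' self_mem_Ici (mem_Ici.mpr (ha.le.trans hat)) ha hat
    (hPa.le.trans hP0)).trans_lt hPa

lemma nonneg_of_hasDerivAt_of_sign_concaveOn {H H' P : ℝ → ℝ} (hHc : ContinuousOn H (Ici 0))
    (hH : ∀ t > 0, HasDerivAt H (H' t) t) (hH0 : 0 ≤ H 0) (hHtop : Tendsto H atTop (𝓝 0))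
    (hP : ConcaveOn ℝ (Ici 0) P) (hP0 : 0 ≤ P 0) (hpos : ∀ t > 0, 0 ≤ P t → 0 ≤ H' t)
    (hneg : ∀ t > 0, P t < 0 → H' t ≤ 0) {y : ℝ} (hy : 0 ≤ y) : 0 ≤ H y := by
  by_cases hPy : ∀ t ∈ Ioo 0 y, 0 ≤ P t
  · have hmono : MonotoneOn H (Icc 0 y) := by
      refine monotoneOn_of_hasDerivWithinAt_nonneg (f' := H') (convex_Icc 0 y)
        (hHc.mono Icc_subset_Ici_self) (fun t ht => ?_) (fun t ht => ?_) <;> rw [interior_Icc] at ht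
      · exact (hH t ht.1).hasDerivWithinAt
      · exact hpos t ht.1 (hPy t ht)
    exact hH0.trans (hmono (left_mem_Icc.mpr hy) (right_mem_Icc.mpr hy) hy)
  · push Not at hPy
    obtain ⟨a, ⟨ha, hay⟩, hPa⟩ := hPy
    have hanti : AntitoneOn H (Ici y) := by
      refine antitoneOn_of_hasDerivWithinAt_nonpos (f' := H') (convex_Ici y)
        (hHc.mono (Ici_subset_Ici.mpr hy)) (fun t ht => ?_) (fun t ht => ?_) <;>
        rw [interior_Ici] at ht
      · exact (hH t (hy.trans_lt ht)).hasDerivWithinAt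
      · exact hneg t (hy.trans_lt ht) (hP.neg_of_neg_of_le hP0 ha (hay.trans ht).le hPa)
    refine le_of_tendsto hHtop ?_
    filter_upwards [eventually_ge_atTop y] with t ht
    exact hanti self_mem_Ici ht ht

noncomputable def gammaDensity (N : ℕ) (x : ℝ) : ℝ :=
  exp (-x) * x ^ (N - 1) / (Nat.factorial (N - 1) : ℝ)

noncomputable def gammaCDF (N : ℕ) (y : ℝ) : ℝ := ∫ x in (0 : ℝ)..y, gammaDensity N x

section GammaDistribution

variable {N : ℕ}

lemma gammaDensity_eq_rpow_div_Gamma (hN : 0 < N) (x : ℝ) :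
    gammaDensity N x = exp (-x) * x ^ ((N : ℝ) - 1) / Gamma N := by
  obtain ⟨n, rfl⟩ := Nat.exists_eq_add_of_lt hN
  simp [gammaDensity, ← rpow_natCast, Gamma_nat_eq_factorial]

lemma integrableOn_gammaDensity (hN : 0 < N) : IntegrableOn (gammaDensity N) (Ioi 0) := by
  rw [funext (gammaDensity_eq_rpow_div_Gamma hN)]
  exact (GammaIntegral_convergent (Nat.cast_pos.mpr hN)).div_const (Gamma N)

lemma integral_gammaDensity (hN : 0 < N) : ∫ x in Ioi 0, gammaDensity N x = 1 := by
  have hΓ : 0 < Gamma N := Gamma_pos_of_pos (Nat.cast_pos.mpr hN)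
  simp only [gammaDensity_eq_rpow_div_Gamma hN]
  rw [integral_div, ← Gamma_eq_integral (Nat.cast_pos.mpr hN), div_self hΓ.ne']

lemma tendsto_gammaCDF_atTop (hN : 0 < N) : Tendsto (gammaCDF N) atTop (𝓝 1) := by
  rw [← integral_gammaDensity hN]
  exact intervalIntegral_tendsto_integral_Ioi 0 (integrableOn_gammaDensity hN) tendsto_id

variable (N)

lemma continuous_gammaDensity : Continuous (gammaDensity N) := by
  unfold gammaDensity
  fun_prop

lemma hasDerivAt_gammaCDF (y : ℝ) : HasDerivAt (gammaCDF N) (gammaDensity N y) y :=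
  ((continuous_gammaDensity N).integral_hasStrictDerivAt 0 y).hasDerivAt

lemma gammaCDF_zero : gammaCDF N 0 = 0 := intervalIntegral.integral_same

end GammaDistribution

noncomputable def alzerBound (N : ℕ) (k y : ℝ) : ℝ := (1 - exp (-(k * y))) ^ N

noncomputable def alzerBoundDeriv (N : ℕ) (k y : ℝ) : ℝ :=
  N * (1 - exp (-(k * y))) ^ (N - 1) * (k * exp (-(k * y)))

/-- `log (gammaDensity N y / alzerBoundDeriv N k y)` when `k ^ N = (N !)⁻¹`. -/
noncomputable def alzerLogRatio (N : ℕ) (k y : ℝ) : ℝ :=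
  (N - 1 : ℕ) * logDivOneSubExpNeg (k * y) + (k - 1) * y

section AlzerBound

variable (N : ℕ) {k : ℝ}

lemma hasDerivAt_alzerBound (k y : ℝ) :
    HasDerivAt (alzerBound N k) (alzerBoundDeriv N k y) y := by
  have h := (hasDerivAt_one_sub_exp_neg (k * y)).comp y ((hasDerivAt_id' y).const_mul k)
  unfold alzerBound
  simpa [alzerBoundDeriv, mul_comm, mul_assoc] using h.fun_pow N

lemma alzerBoundDeriv_nonneg (hk : 0 ≤ k) {y : ℝ} (hy : 0 ≤ y) :
    0 ≤ alzerBoundDeriv N k y := by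
  have : 0 ≤ 1 - exp (-(k * y)) := by
    rw [sub_nonneg, exp_le_one_iff, neg_nonpos]
    positivity
  unfold alzerBoundDeriv
  positivity

lemma tendsto_alzerBound_atTop (hk : 0 < k) : Tendsto (alzerBound N k) atTop (𝓝 1) := by
  have h : Tendsto (fun y => exp (-(k * y))) atTop (𝓝 0) :=
    tendsto_exp_atBot.comp (tendsto_neg_atTop_atBot.comp (tendsto_id.const_mul_atTop hk))
  unfold alzerBound
  simpa using (tendsto_const_nhds (x := (1 : ℝ)) |>.sub h).pow N

lemma alzerBound_zero (hN : 0 < N) (k : ℝ) : alzerBound N k 0 = 0 := by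
  simp [alzerBound, hN.ne']

lemma alzerLogRatio_zero (k : ℝ) : alzerLogRatio N k 0 = 0 := by
  simp [alzerLogRatio, logDivOneSubExpNeg_zero]

lemma concaveOn_alzerLogRatio (hk : 0 ≤ k) : ConcaveOn ℝ (Ici 0) (alzerLogRatio N k) := by
  have hscale : ConcaveOn ℝ (Ici 0) fun y => logDivOneSubExpNeg (k * y) :=
    (concaveOn_logDivOneSubExpNeg.comp_linearMap (LinearMap.mul ℝ ℝ k)).subset
      (fun y hy => mul_nonneg hk hy) (convex_Ici 0)
  exact (hscale.smul (Nat.cast_nonneg _)).add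
    ((LinearMap.mul ℝ ℝ (k - 1)).concaveOn (convex_Ici 0))

lemma gammaDensity_eq_alzerBoundDeriv_mul_exp (hN : 0 < N) (hk : k ^ N = (N.factorial : ℝ)⁻¹)
    {y : ℝ} (hy : y ≠ 0) :
    gammaDensity N y = alzerBoundDeriv N k y * exp (alzerLogRatio N k y) := by
  have hk0 : k ≠ 0 := by
    rintro rfl
    rw [zero_pow hN.ne'] at hk
    exact inv_ne_zero (by positivity) hk.symm
  obtain ⟨n, rfl⟩ : ∃ n, N = n + 1 := ⟨N - 1, by omega⟩
  have hky := mul_ne_zero hk0 hy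
  have hexp : exp (-(k * y)) * exp ((k - 1) * y) = exp (-y) := by rw [← exp_add]; ring_nf
  have hcancel : (1 - exp (-(k * y))) ^ n / (1 - exp (-(k * y))) ^ n = 1 :=
    div_self (pow_ne_zero _ (one_sub_exp_neg_ne_zero hky))
  rw [alzerLogRatio, exp_add, exp_nat_mul, exp_logDivOneSubExpNeg hky]
  simp only [gammaDensity, alzerBoundDeriv, Nat.add_sub_cancel, div_pow, mul_pow]
  calc exp (-y) * y ^ n / n.factorial
      = (n + 1 : ℕ) * k ^ (n + 1) * (exp (-(k * y)) * exp ((k - 1) * y)) * y ^ n := by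
        rw [hexp, hk, Nat.factorial_succ]
        push_cast
        field_simp
    _ = (n + 1 : ℕ) * k ^ (n + 1) * (exp (-(k * y)) * exp ((k - 1) * y)) * y ^ n *
          ((1 - exp (-(k * y))) ^ n / (1 - exp (-(k * y))) ^ n) := by
        rw [hcancel, mul_one]
    _ = _ := by ring

/-- Alzer's inequality (lower bound form): if `X ~ Gamma(N, 1)` with integer `N ≥ 1`,
so `P(X ≤ y) = ∫_0^y e^{-x} x^{N-1}/(N-1)! dx`, then for all `y ≥ 0`,
`(1 - exp(-κ y))^N ≤ P(X ≤ y)` where `κ = (N!)^{-1/N}`. -/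
theorem alzer_inequality (N : ℕ) (hN : 1 ≤ N) (y : ℝ) (hy : 0 ≤ y) :
    (1 - Real.exp (-(((Nat.factorial N : ℝ) ^ (-(1 : ℝ) / N)) * y))) ^ N
      ≤ ∫ x in Ioc (0 : ℝ) y, Real.exp (-x) * x ^ (N - 1 : ℕ) / Nat.factorial (N - 1) := by
  set κ : ℝ := (Nat.factorial N : ℝ) ^ (-(1 : ℝ) / N) with hκ_def
  have hκ : 0 < κ := by positivity
  have hκN : κ ^ N = (Nat.factorial N : ℝ)⁻¹ := by
    rw [hκ_def, neg_div, one_div, rpow_neg (by positivity), inv_pow,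
      rpow_inv_natCast_pow (by positivity) (by omega)]
  have hH (t : ℝ) : HasDerivAt (fun t => gammaCDF N t - alzerBound N κ t)
      (gammaDensity N t - alzerBoundDeriv N κ t) t :=
    (hasDerivAt_gammaCDF N t).sub (hasDerivAt_alzerBound N κ t)
  have hsign (t : ℝ) (ht : 0 < t) : gammaDensity N t - alzerBoundDeriv N κ t
      = alzerBoundDeriv N κ t * (exp (alzerLogRatio N κ t) - 1) := by
    rw [gammaDensity_eq_alzerBoundDeriv_mul_exp N hN hκN ht.ne', mul_sub_one]
  have key := nonneg_of_hasDerivAt_of_sign_concaveOn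
    (fun t _ => (hH t).continuousAt.continuousWithinAt) (fun t _ => hH t)
    (by simp [gammaCDF_zero, alzerBound_zero N hN])
    (by simpa using (tendsto_gammaCDF_atTop hN).sub (tendsto_alzerBound_atTop N hκ))
    (concaveOn_alzerLogRatio N hκ.le) (alzerLogRatio_zero N κ).ge
    (fun t ht hP => hsign t ht ▸ mul_nonneg (alzerBoundDeriv_nonneg N hκ.le ht.le)
      (sub_nonneg.mpr (one_le_exp hP)))
    (fun t ht hP => hsign t ht ▸ mul_nonpos_of_nonneg_of_nonpos
      (alzerBoundDeriv_nonneg N hκ.le ht.le) (sub_nonpos.mpr (exp_le_one_iff.mpr hP.le)))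
    hy
  rw [← intervalIntegral.integral_of_le hy]
  exact sub_nonneg.mp key
end AlzerBound
end
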